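/- Let F be a quasihomogeneous WDVV solution with charges (q,d) on U ⊆ ℝ^N and suppose d = 1. Then on the open subset of U where the intersection form (g^{αβ}(t)) is invertible, the Christoffel symbols of g satisfy Γ^N_{αβ}(t) = 0 for all α, β; equivalently, t_1 = t^N is a flat coordinate of the intersection form g (it is a flat coordinate of η trivially). -/

import Mathlib

open scoped BigOperators

/-- Partial derivative of `f` in the `α`-th coordinate direction. -/
noncomputable def pd {N : ℕ} (α : Fin N) (f : (Fin N → ℝ) → ℝ) : (Fin N → ℝ) → ℝ :=
  fun t => fderiv ℝ f t (Pi.single α 1)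

/-- Third partial derivatives `c_{αβγ} = ∂³F/∂t^α∂t^β∂t^γ`. -/
noncomputable def c3 {N : ℕ} (F : (Fin N → ℝ) → ℝ) (α β γ : Fin N) : (Fin N → ℝ) → ℝ :=
  pd α (pd β (pd γ F))

/-- `η_{αβ} = δ_{α+β,N+1}` (in 1-based index notation); in 0-based indexing this is
`β = Fin.rev α`.  It coincides with its own inverse `η^{αβ}`. -/
def eta {N : ℕ} (α β : Fin N) : ℝ := if β = α.rev then 1 else 0

/-- The index of the coordinate `t^N` (0-based: `N-1`). -/
def lastIdx (N : ℕ) [NeZero N] : Fin N := (0 : Fin N).rev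

/-- `F` is a WDVV solution on `U`: smoothness, normalization `c_{1αβ} = η_{αβ}`, and the
associativity equations. -/
def IsWDVV {N : ℕ} [NeZero N] (F : (Fin N → ℝ) → ℝ) (U : Set (Fin N → ℝ)) : Prop :=
  (∀ t ∈ U, ContDiffAt ℝ (⊤ : ℕ∞) F t) ∧
  (∀ t ∈ U, ∀ α β : Fin N, c3 F 0 α β t = eta α β) ∧
  (∀ t ∈ U, ∀ α β γ δ : Fin N,
    ∑ lam, ∑ mu, c3 F α β lam t * eta lam mu * c3 F mu δ γ t =
    ∑ lam, ∑ mu, c3 F δ β lam t * eta lam mu * c3 F mu α γ t)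

/-- `F` is quasihomogeneous on `U` with charges `q` and weight `d`:
`q_1 = 0`, `q_N = d`, `q_α + q_{N+1-α} = d`, and `E(F) = (3-d) F` modulo a polynomial of
degree at most `2`, where `E = Σ_α (1-q_α) t^α ∂_α`. -/
def IsQH {N : ℕ} [NeZero N] (F : (Fin N → ℝ) → ℝ) (U : Set (Fin N → ℝ))
    (q : Fin N → ℝ) (d : ℝ) : Prop :=
  q 0 = 0 ∧ q (lastIdx N) = d ∧ (∀ α : Fin N, q α + q α.rev = d) ∧
  ∃ Q : MvPolynomial (Fin N) ℝ, Q.totalDegree ≤ 2 ∧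
    ∀ t ∈ U, (∑ α, (1 - q α) * t α * pd α F t) = (3 - d) * F t + MvPolynomial.eval t Q

/-- The inversion map `t ↦ t̂`:
`t̂^1 = (1/2) t_σ t^σ / t^N`, `t̂^α = t^α/t^N` (`1<α<N`), `t̂^N = -1/t^N`,
with `t_σ t^σ = Σ_σ t^σ t^{N+1-σ}`. -/
noncomputable def invMap {N : ℕ} [NeZero N] (t : Fin N → ℝ) : Fin N → ℝ := fun α =>
  if α = 0 then (∑ σ, t σ * t σ.rev) / (2 * t (lastIdx N))
  else if α = lastIdx N then -1 / t (lastIdx N)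
  else t α / t (lastIdx N)

/-- The inverse of the inversion map, `t̂ ↦ t`:
`t^1 = (1/2) t̂_σ t̂^σ / t̂^N`, `t^α = -t̂^α/t̂^N` (`1<α<N`), `t^N = -1/t̂^N`. -/
noncomputable def invMapInv {N : ℕ} [NeZero N] (s : Fin N → ℝ) : Fin N → ℝ := fun α =>
  if α = 0 then (∑ σ, s σ * s σ.rev) / (2 * s (lastIdx N))
  else if α = lastIdx N then -1 / s (lastIdx N)
  else -(s α) / s (lastIdx N)

/-- The inverted prepotential `F̂(t̂) = (t̂^N)² F(t(t̂)) + (1/2) t̂^1 t̂_σ t̂^σ`. -/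
noncomputable def invF {N : ℕ} [NeZero N] (F : (Fin N → ℝ) → ℝ) : (Fin N → ℝ) → ℝ :=
  fun s => (s (lastIdx N))^2 * F (invMapInv s) + (1/2) * s 0 * (∑ σ, s σ * s σ.rev)

/-- The intersection form `g^{αβ}(t) = Σ_ε (1-q_ε) t^ε η^{αλ} η^{βμ} c_{λμε}(t)`. -/
noncomputable def iform {N : ℕ} (F : (Fin N → ℝ) → ℝ) (q : Fin N → ℝ)
    (t : Fin N → ℝ) : Matrix (Fin N) (Fin N) ℝ :=
  Matrix.of fun α β =>
    ∑ ε, (1 - q ε) * t ε * ∑ lam, ∑ mu, eta α lam * eta β mu * c3 F lam mu ε t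

/-- The Christoffel symbols (with one upper index) of the Levi-Civita connection of the
metric `g_{αβ}` (the matrix inverse of the intersection form), in the coordinates `t`:
`Γ^ε_{αβ} = (1/2) g^{εσ} (∂_α g_{σβ} + ∂_β g_{σα} - ∂_σ g_{αβ})`. -/
noncomputable def christoffel {N : ℕ} (F : (Fin N → ℝ) → ℝ) (q : Fin N → ℝ)
    (t : Fin N → ℝ) (ε α β : Fin N) : ℝ :=
  (1/2) * ∑ σ, iform F q t ε σ *
    (pd α (fun x => (iform F q x)⁻¹ σ β) t + pd β (fun x => (iform F q x)⁻¹ σ α) t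
      - pd σ (fun x => (iform F q x)⁻¹ α β) t)

/-!
By the normalisation `c_{1αβ} = η_{αβ}` the last row of the intersection form is
`g^{Nσ} = (1 - q_σ) t^σ`, so contracting with it turns `∂_σ` into the Euler field `E`.
Quasihomogeneity makes each `g^{αβ}` an eigenfunction of `E` with eigenvalue `1 + d - q_α - q_β`,
hence each entry `g_{αβ}` of the inverse matrix is one with the opposite eigenvalue. Differentiating
`g^{Nσ} g_{σβ} = δ^N_β` gives `g^{Nσ} ∂_α g_{σβ} = -(1 - q_α) g_{αβ}`, and with the symmetry of `g`
this yields `2 Γ^N_{αβ} = (d - 1) g_{αβ}`, which vanishes for `d = 1`.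
-/

open Filter MvPolynomial
open scoped ContDiff Topology

section PartialDerivatives

variable {N : ℕ} {f g : (Fin N → ℝ) → ℝ} {t : Fin N → ℝ}

theorem pd_congr (h : f =ᶠ[𝓝 t] g) (α : Fin N) : pd α f t = pd α g t := by
  rw [pd, pd, h.fderiv_eq]

theorem pd_const (α : Fin N) (c : ℝ) : pd α (fun _ => c) t = 0 := by
  simp [pd]

theorem pd_coord (α i : Fin N) : pd α (fun x => x i) t = if i = α then 1 else 0 := by
  rw [pd, show (fun x : Fin N → ℝ => x i) =
      ContinuousLinearMap.proj (R := ℝ) (φ := fun _ : Fin N => ℝ) i from rfl,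
    ContinuousLinearMap.fderiv]
  simp [Pi.single_apply]

theorem pd_add (hf : DifferentiableAt ℝ f t) (hg : DifferentiableAt ℝ g t) (α : Fin N) :
    pd α (fun x => f x + g x) t = pd α f t + pd α g t := by
  simp [pd, fderiv_fun_add hf hg]

theorem pd_mul (hf : DifferentiableAt ℝ f t) (hg : DifferentiableAt ℝ g t) (α : Fin N) :
    pd α (fun x => f x * g x) t = f t * pd α g t + g t * pd α f t := by
  simp [pd, fderiv_fun_mul hf hg]

theorem pd_const_mul (hf : DifferentiableAt ℝ f t) (c : ℝ) (α : Fin N) :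
    pd α (fun x => c * f x) t = c * pd α f t := by
  simp [pd, fderiv_const_mul hf]

theorem pd_sum {ι : Type*} (s : Finset ι) {f : ι → (Fin N → ℝ) → ℝ}
    (h : ∀ i ∈ s, DifferentiableAt ℝ (f i) t) (α : Fin N) :
    pd α (fun x => ∑ i ∈ s, f i x) t = ∑ i ∈ s, pd α (f i) t := by
  simp [pd, fderiv_fun_sum h]

theorem ContDiffAt.pd (hf : ContDiffAt ℝ ∞ f t) (α : Fin N) : ContDiffAt ℝ ∞ (pd α f) t :=
  (ContinuousLinearMap.apply ℝ ℝ (Pi.single α 1 : Fin N → ℝ)).contDiff.contDiffAt.comp t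
    (hf.fderiv_right (by simp))

theorem pd_comm (hf : ContDiffAt ℝ ∞ f t) (α β : Fin N) :
    pd α (pd β f) t = pd β (pd α f) t := by
  have hd : DifferentiableAt ℝ (fderiv ℝ f) t :=
    (hf.fderiv_right (m := ∞) (by simp)).differentiableAt (by simp)
  have hswap (v w : Fin N → ℝ) :
      fderiv ℝ (fun x => fderiv ℝ f x v) t w = fderiv ℝ (fderiv ℝ f) t w v := by
    rw [fderiv_clm_apply hd (differentiableAt_const v)]
    simp
  have hsymm : IsSymmSndFDerivAt ℝ f t :=
    hf.isSymmSndFDerivAt (by simpa using ENat.LEInfty.out)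
  unfold pd
  rw [hswap, hswap, hsymm]

end PartialDerivatives

section Polynomials

theorem MvPolynomial.totalDegree_pderiv_le {σ R : Type*} [CommSemiring R]
    (p : MvPolynomial σ R) (i : σ) : (pderiv i p).totalDegree ≤ p.totalDegree - 1 := by
  conv_lhs => rw [p.as_sum, map_sum]
  refine (totalDegree_finsetSum _ _).trans (Finset.sup_le fun s hs => ?_)
  rw [pderiv_monomial]
  by_cases hsi : s i = 0
  · simp [hsi]
  refine (totalDegree_monomial_le _ _).trans ?_
  have hsplit : (s.sum fun _ e => e) = ((s - Finsupp.single i 1).sum fun _ e => e) + 1 := by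
    conv_lhs => rw [← tsub_add_cancel_of_le (Finsupp.single_le_iff.mpr
      (Nat.one_le_iff_ne_zero.mpr hsi))]
    rw [Finsupp.sum_add_index' (by simp) (by simp), Finsupp.sum_single_index rfl]
  show ((s - Finsupp.single i 1).sum fun _ e => e) ≤ _
  have := le_totalDegree hs
  omega

theorem MvPolynomial.eval_pderiv_pderiv_of_totalDegree_le_two {σ R : Type*} [CommSemiring R]
    {Q : MvPolynomial σ R} (hQ : Q.totalDegree ≤ 2) (i j : σ) (y : σ → R) :
    eval y (pderiv i (pderiv j Q)) = (pderiv i (pderiv j Q)).coeff 0 := by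
  have hdeg : (pderiv i (pderiv j Q)).totalDegree = 0 := by
    have := totalDegree_pderiv_le (pderiv j Q) i
    have := totalDegree_pderiv_le Q j
    omega
  conv_lhs => rw [totalDegree_eq_zero_iff_eq_C.mp hdeg]
  simp

variable {N : ℕ}

theorem differentiableAt_eval (Q : MvPolynomial (Fin N) ℝ) (t : Fin N → ℝ) :
    DifferentiableAt ℝ (fun x => eval x Q) t :=
  (AnalyticOnNhd.eval_mvPolynomial Q t trivial).differentiableAt

theorem pd_eval (Q : MvPolynomial (Fin N) ℝ) (α : Fin N) (t : Fin N → ℝ) :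
    pd α (fun x => eval x Q) t = eval t (pderiv α Q) := by
  induction Q using MvPolynomial.induction_on with
  | C a => simp [pd_const]
  | add P Q hP hQ =>
    simp only [map_add]
    rw [pd_add (differentiableAt_eval P t) (differentiableAt_eval Q t), hP, hQ]
  | mul_X P i hP =>
    simp only [eval_mul, eval_X, pderiv_mul, pderiv_X]
    rw [pd_mul (differentiableAt_eval P t) (by fun_prop), hP, pd_coord]
    rcases eq_or_ne i α with rfl | h <;> simp [*, mul_comm, add_comm]

end Polynomials

section Euler

variable {N : ℕ} {q : Fin N → ℝ} {f g : (Fin N → ℝ) → ℝ} {t : Fin N → ℝ}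

variable (q) in
noncomputable def euler (f : (Fin N → ℝ) → ℝ) (t : Fin N → ℝ) : ℝ :=
  ∑ σ, (1 - q σ) * t σ * pd σ f t

theorem euler_congr (h : f =ᶠ[𝓝 t] g) : euler q f t = euler q g t := by
  simp only [euler, pd_congr h]

theorem euler_eq_fderiv : euler q f t = fderiv ℝ f t (fun σ => (1 - q σ) * t σ) := by
  conv_rhs => rw [← Finset.univ_sum_single (fun σ => (1 - q σ) * t σ)]
  rw [euler, map_sum]
  refine Finset.sum_congr rfl fun σ _ => ?_
  rw [pd, ← smul_eq_mul, ← map_smul, ← Pi.single_smul', smul_eq_mul, mul_one]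

theorem euler_const_mul_add (hf : DifferentiableAt ℝ f t) (k c : ℝ) :
    euler q (fun x => k * f x + c) t = k * euler q f t := by
  simp only [euler, pd_add (hf.const_mul k) (differentiableAt_const c), pd_const_mul hf,
    pd_const, Finset.mul_sum]
  exact Finset.sum_congr rfl fun _ _ => by ring

theorem pd_euler (hf : ContDiffAt ℝ ∞ f t) (lam : Fin N) :
    pd lam (euler q f) t = euler q (pd lam f) t + (1 - q lam) * pd lam f t := by
  have hdiff (σ : Fin N) : DifferentiableAt ℝ (pd σ f) t := (hf.pd σ).differentiableAt (by simp)
  have hterm (σ : Fin N) : pd lam (fun x => (1 - q σ) * x σ * pd σ f x) t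
      = (1 - q σ) * t σ * pd σ (pd lam f) t + (if σ = lam then (1 - q σ) * pd σ f t else 0) := by
    rw [pd_mul (by fun_prop) (hdiff σ),
      pd_const_mul (by fun_prop), pd_coord, pd_comm hf]
    split_ifs <;> ring
  change pd lam (fun x => ∑ σ, (1 - q σ) * x σ * pd σ f x) t = _
  rw [pd_sum _ fun σ _ => by fun_prop, Finset.sum_congr rfl fun σ _ => hterm σ,
    Finset.sum_add_distrib, Finset.sum_ite_eq']
  simp [euler]

theorem euler_pd {U : Set (Fin N → ℝ)} (hU : IsOpen U) {k : ℝ}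
    (hf : ∀ x ∈ U, ContDiffAt ℝ ∞ f x) (hg : ∀ x ∈ U, DifferentiableAt ℝ g x)
    (h : ∀ x ∈ U, euler q f x = k * f x + g x) (lam : Fin N) :
    ∀ x ∈ U, euler q (pd lam f) x = (k - (1 - q lam)) * pd lam f x + pd lam g x := by
  intro x hx
  have hEf : pd lam (euler q f) x = pd lam (fun y => k * f y + g y) x :=
    pd_congr (eventually_of_mem (hU.mem_nhds hx) h) lam
  have hdf := (hf x hx).differentiableAt (by simp)
  rw [pd_euler (hf x hx), pd_add (hdf.const_mul k) (hg x hx), pd_const_mul hdf] at hEf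
  linarith

end Euler

section MatrixInverse

variable {E : Type*} [NormedAddCommGroup E] [NormedSpace ℝ E]
  {ι : Type*} [Fintype ι] [DecidableEq ι] {M : E → Matrix ι ι ℝ} {t : E}

noncomputable def entrywiseFDeriv (M : E → Matrix ι ι ℝ) (t v : E) : Matrix ι ι ℝ :=
  Matrix.of fun i j => fderiv ℝ (fun x => M x i j) t v

section LinftyOpNorm

attribute [local instance] Matrix.linftyOpNormedRing Matrix.linftyOpNormedAlgebra

private noncomputable def entryCLM (i j : ι) : Matrix ι ι ℝ →L[ℝ] ℝ :=
  LinearMap.toContinuousLinearMap (Matrix.entryLinearMap ℝ ℝ i j)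

private theorem differentiableAt_of_entries
    (hM : ∀ i j, DifferentiableAt ℝ (fun x => M x i j) t) : DifferentiableAt ℝ M t := by
  have hsum : M = fun x => ∑ i, ∑ j, M x i j • Matrix.single i j (1 : ℝ) := by
    funext x
    conv_lhs => rw [Matrix.matrix_eq_sum_single (M x)]
    simp [Matrix.smul_single]
  rw [hsum]
  exact .fun_sum fun i _ => .fun_sum fun j _ => (hM i j).smul_const _

private theorem entrywiseFDeriv_eq_fderiv (hM : DifferentiableAt ℝ M t) (v : E) :
    entrywiseFDeriv M t v = fderiv ℝ M t v := by
  ext i j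
  exact congrArg (· v) ((entryCLM i j).hasFDerivAt.comp t hM.hasFDerivAt).fderiv

private theorem hasFDerivAt_matrix_inv (hM : ∀ i j, DifferentiableAt ℝ (fun x => M x i j) t)
    (hdet : IsUnit (M t).det) :
    HasFDerivAt (fun x => (M x)⁻¹)
      ((-ContinuousLinearMap.mulLeftRight ℝ _ (M t)⁻¹ (M t)⁻¹).comp (fderiv ℝ M t)) t := by
  obtain ⟨u, hu⟩ := (M t).isUnit_iff_isUnit_det.mpr hdet
  have := (hu ▸ hasFDerivAt_ringInverse (𝕜 := ℝ) u).comp t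
    (differentiableAt_of_entries hM).hasFDerivAt
  simp only [Matrix.coe_units_inv, hu, Function.comp_def,
    ← Matrix.nonsing_inv_eq_ringInverse] at this
  exact this

end LinftyOpNorm

theorem entrywiseFDeriv_inv (hM : ∀ i j, DifferentiableAt ℝ (fun x => M x i j) t)
    (hdet : IsUnit (M t).det) (v : E) :
    entrywiseFDeriv (fun x => (M x)⁻¹) t v = -((M t)⁻¹ * entrywiseFDeriv M t v * (M t)⁻¹) := by
  have hinv := hasFDerivAt_matrix_inv hM hdet
  rw [entrywiseFDeriv_eq_fderiv hinv.differentiableAt, entrywiseFDeriv_eq_fderiv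
    (differentiableAt_of_entries hM)]
  -- `hinv` lives in the `linftyOp` normed structure on matrices, hence `erw`
  erw [hinv.fderiv]
  rfl

theorem fderiv_inv_apply_of_weighted (hM : ∀ i j, DifferentiableAt ℝ (fun x => M x i j) t)
    (hdet : IsUnit (M t).det) {v : E} {s : ℝ} {w : ι → ℝ}
    (hv : ∀ i j, fderiv ℝ (fun x => M x i j) t v = (s - w i - w j) * M t i j) (a b : ι) :
    fderiv ℝ (fun x => (M x)⁻¹ a b) t v = -(s - w a - w b) * (M t)⁻¹ a b := by
  have hMv : entrywiseFDeriv M t v =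
      s • M t - Matrix.diagonal w * M t - M t * Matrix.diagonal w := by
    ext i j
    simp only [entrywiseFDeriv, hv, Matrix.of_apply, Matrix.sub_apply, Matrix.smul_apply,
      smul_eq_mul, Matrix.diagonal_mul, Matrix.mul_diagonal]
    ring
  have hinv : entrywiseFDeriv (fun x => (M x)⁻¹) t v =
      -s • (M t)⁻¹ + (M t)⁻¹ * Matrix.diagonal w + Matrix.diagonal w * (M t)⁻¹ := by
    rw [entrywiseFDeriv_inv hM hdet, hMv]
    simp only [Matrix.mul_sub, Matrix.sub_mul, Matrix.mul_smul, Matrix.smul_mul,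
      Matrix.nonsing_inv_mul _ hdet, Matrix.mul_nonsing_inv_cancel_right _ _ hdet,
      ← Matrix.mul_assoc, Matrix.one_mul]
    rw [neg_smul]
    abel
  have := congrFun₂ hinv a b
  simp only [entrywiseFDeriv, Matrix.of_apply, Matrix.add_apply,
    Matrix.smul_apply, smul_eq_mul, Matrix.mul_diagonal, Matrix.diagonal_mul] at this
  rw [this]; ring

end MatrixInverse

section IntersectionForm

variable {N : ℕ} {F : (Fin N → ℝ) → ℝ} {q : Fin N → ℝ} {x : Fin N → ℝ} {U : Set (Fin N → ℝ)}

theorem iform_apply (i j : Fin N) :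
    iform F q x i j = ∑ ε, (1 - q ε) * x ε * c3 F i.rev j.rev ε x := by
  simp [iform, eta, Finset.sum_ite_eq']

theorem iform_last_apply [NeZero N] (hnorm : ∀ α β, c3 F 0 α β x = eta α β) (σ : Fin N) :
    iform F q x (lastIdx N) σ = (1 - q σ) * x σ := by
  simp [iform_apply, lastIdx, hnorm, eta, Finset.sum_ite_eq']

theorem contDiffAt_iform_apply (hF : ContDiffAt ℝ ∞ F x) (i j : Fin N) :
    ContDiffAt ℝ ∞ (fun y => iform F q y i j) x := by
  simp only [iform_apply]
  exact ContDiffAt.sum fun ε _ => (contDiffAt_const.mul (contDiffAt_apply ℝ _ ε x)).mul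
    (((hF.pd ε).pd j.rev).pd i.rev)

theorem iform_isSymm (hF : ContDiffAt ℝ ∞ F x) : (iform F q x).IsSymm :=
  Matrix.IsSymm.ext fun i j => by simp only [iform_apply, c3, pd_comm (hF.pd _)]

theorem iform_eq_euler (hU : IsOpen U) (hF : ∀ y ∈ U, ContDiffAt ℝ ∞ F y) (hx : x ∈ U)
    (i j : Fin N) : iform F q x i j = euler q (pd i.rev (pd j.rev F)) x := by
  rw [iform_apply, euler]
  refine Finset.sum_congr rfl fun ε _ => ?_
  have hcomm : pd j.rev (pd ε F) =ᶠ[𝓝 x] pd ε (pd j.rev F) :=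
    eventually_of_mem (hU.mem_nhds hx) fun y hy => pd_comm (hF y hy) _ _
  rw [c3, pd_congr hcomm, pd_comm ((hF x hx).pd _)]

theorem euler_iform [NeZero N] {d : ℝ} (hU : IsOpen U) (hF : ∀ y ∈ U, ContDiffAt ℝ ∞ F y)
    (hQ : IsQH F U q d) (hx : x ∈ U) (i j : Fin N) :
    euler q (fun y => iform F q y i j) x = (1 + d - q i - q j) * iform F q x i j := by
  obtain ⟨-, -, hrev, Q, hQdeg, hEQ⟩ := hQ
  have hEh (y : Fin N → ℝ) (hy : y ∈ U) : euler q (pd i.rev (pd j.rev F)) y =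
      (1 + d - q i - q j) * pd i.rev (pd j.rev F) y + (pderiv i.rev (pderiv j.rev Q)).coeff 0 := by
    have h1 := euler_pd hU hF (fun y _ => differentiableAt_eval Q y) hEQ j.rev
    simp only [pd_eval] at h1
    have h2 := euler_pd hU (fun y hy => (hF y hy).pd j.rev)
      (fun y _ => differentiableAt_eval _ y) h1 i.rev
    rw [h2 y hy, pd_eval, eval_pderiv_pderiv_of_totalDegree_le_two hQdeg]
    congr 2
    linarith [hrev i, hrev j]
  have hG : (fun y => iform F q y i j) =ᶠ[𝓝 x] euler q (pd i.rev (pd j.rev F)) :=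
    eventually_of_mem (hU.mem_nhds hx) fun y hy => iform_eq_euler hU hF hy i j
  rw [euler_congr hG, euler_congr (eventually_of_mem (hU.mem_nhds hx) hEh),
    euler_const_mul_add ((((hF x hx).pd _).pd _).differentiableAt (by simp)),
    iform_eq_euler hU hF hx]

end IntersectionForm

section Christoffel

variable {N : ℕ} [NeZero N] {F : (Fin N → ℝ) → ℝ} {q : Fin N → ℝ} {x : Fin N → ℝ}
  {U : Set (Fin N → ℝ)}

theorem pd_iform_last_apply (hU : IsOpen U) (hnorm : ∀ y ∈ U, ∀ α β, c3 F 0 α β y = eta α β)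
    (hx : x ∈ U) (a c : Fin N) :
    pd a (fun y => iform F q y (lastIdx N) c) x = if c = a then 1 - q c else 0 := by
  rw [pd_congr (eventually_of_mem (hU.mem_nhds hx) fun y hy => iform_last_apply (hnorm y hy) c),
    pd_const_mul (by fun_prop), pd_coord]
  simp

theorem sum_iform_last_mul_pd_inv (hU : IsOpen U) (hF : ∀ y ∈ U, ContDiffAt ℝ ∞ F y)
    (hnorm : ∀ y ∈ U, ∀ α β, c3 F 0 α β y = eta α β) (hx : x ∈ U)
    (hdet : IsUnit (iform F q x).det) (a b : Fin N) :
    ∑ σ, iform F q x (lastIdx N) σ * pd a (fun y => (iform F q y)⁻¹ σ b) x =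
      -((1 - q a) * (iform F q x)⁻¹ a b) := by
  have hGd (i j : Fin N) : DifferentiableAt ℝ (fun y => iform F q y i j) x :=
    (contDiffAt_iform_apply (hF x hx) i j).differentiableAt (by simp)
  have h := congrArg (fun A : Matrix (Fin N) (Fin N) ℝ => (iform F q x * A) (lastIdx N) b)
    (entrywiseFDeriv_inv hGd hdet (Pi.single a 1))
  simp only [Matrix.mul_neg, ← Matrix.mul_assoc, Matrix.mul_nonsing_inv _ hdet,
    Matrix.one_mul] at h
  simp only [Matrix.neg_apply, Matrix.mul_apply, entrywiseFDeriv, Matrix.of_apply] at h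
  refine h.trans ?_
  change -∑ c, pd a (fun y => iform F q y (lastIdx N) c) x * _ = _
  simp [pd_iform_last_apply hU hnorm hx]

theorem euler_iform_inv {d : ℝ} (hU : IsOpen U) (hF : ∀ y ∈ U, ContDiffAt ℝ ∞ F y)
    (hQ : IsQH F U q d) (hx : x ∈ U) (hdet : IsUnit (iform F q x).det) (a b : Fin N) :
    euler q (fun y => (iform F q y)⁻¹ a b) x = -(1 + d - q a - q b) * (iform F q x)⁻¹ a b := by
  rw [euler_eq_fderiv]
  refine fderiv_inv_apply_of_weighted
    (fun i j => (contDiffAt_iform_apply (hF x hx) i j).differentiableAt (by simp)) hdet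
    (fun i j => ?_) a b
  rw [← euler_eq_fderiv, euler_iform hU hF hQ hx]

theorem two_mul_christoffel_last {d : ℝ} (hU : IsOpen U) (hF : ∀ y ∈ U, ContDiffAt ℝ ∞ F y)
    (hnorm : ∀ y ∈ U, ∀ α β, c3 F 0 α β y = eta α β) (hQ : IsQH F U q d) (hx : x ∈ U)
    (hdet : IsUnit (iform F q x).det) (a b : Fin N) :
    2 * christoffel F q x (lastIdx N) a b = (d - 1) * (iform F q x)⁻¹ a b := by
  have hE : ∑ σ, iform F q x (lastIdx N) σ * pd σ (fun y => (iform F q y)⁻¹ a b) x =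
      euler q (fun y => (iform F q y)⁻¹ a b) x := by
    simp only [euler, iform_last_apply (hnorm x hx)]
  simp only [christoffel, mul_add, mul_sub, Finset.sum_add_distrib, Finset.sum_sub_distrib]
  rw [sum_iform_last_mul_pd_inv hU hF hnorm hx hdet, sum_iform_last_mul_pd_inv hU hF hnorm hx hdet,
    hE, euler_iform_inv hU hF hQ hx hdet, (iform_isSymm (hF x hx)).inv.apply a b]
  ring

end Christoffel

theorem statement15_general {N : ℕ} [NeZero N]
    (U : Set (Fin N → ℝ)) (hU : IsOpen U)
    (F : (Fin N → ℝ) → ℝ) (q : Fin N → ℝ)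
    (hW : IsWDVV F U) (hQ : IsQH F U q 1) :
    ∀ t ∈ U, IsUnit (iform F q t).det →
      (∀ α β : Fin N, christoffel F q t (lastIdx N) α β = 0) ∧
      (∀ α β : Fin N,
        pd α (pd β (fun x => x (lastIdx N))) t =
          ∑ ε, christoffel F q t ε α β * pd ε (fun x => x (lastIdx N)) t) := by
  obtain ⟨hF, hnorm, -⟩ := hW
  intro t ht hdet
  have hΓ (α β : Fin N) : christoffel F q t (lastIdx N) α β = 0 := by
    simpa using two_mul_christoffel_last hU hF hnorm hQ ht hdet α β
  refine ⟨hΓ, fun α β => ?_⟩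
  have hcoord : pd β (fun x : Fin N → ℝ => x (lastIdx N)) =
      fun _ => if lastIdx N = β then 1 else 0 :=
    funext fun _ => pd_coord β _
  simp [hcoord, pd_const, pd_coord, hΓ]

/-- when `d = 1`, the Christoffel symbols of the intersection form satisfy
`Γ^N_{αβ} = 0`; equivalently, `t_1 = t^N` is a flat coordinate of the intersection
form. -/
theorem statement15 {N : ℕ} [NeZero N] (hN : 3 ≤ N)
    (U : Set (Fin N → ℝ)) (hU : IsOpen U)
    (F : (Fin N → ℝ) → ℝ) (q : Fin N → ℝ)
    (hW : IsWDVV F U) (hQ : IsQH F U q 1) :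
    ∀ t ∈ U, IsUnit (iform F q t).det →
      (∀ α β : Fin N, christoffel F q t (lastIdx N) α β = 0) ∧
      (∀ α β : Fin N,
        pd α (pd β (fun x => x (lastIdx N))) t =
          ∑ ε, christoffel F q t ε α β * pd ε (fun x => x (lastIdx N)) t) :=
  statement15_general U hU F q hW hQ
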